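/- Let ε be a real-valued random variable with continuous, strictly increasing cumulative distribution function G on an interval, and let m, m' : ℝ → ℝ be continuous strictly increasing functions. Define Y = m(ε) and Y' = m'(ε) with CDFs F and F'. Then for all y in the interior of the support of Y, m'(m⁻¹(y)) = F'⁻¹(F(y)), where F'⁻¹ denotes the quantile function of Y'. -/
import Mathlib


open MeasureTheory Filter

/-- Lemma 1 (identification of the counterfactual mapping by quantile matching):
if `Y = m ∘ ε` and `Y' = m' ∘ ε` for a common scalar error `ε` with continuous
strictly increasing CDF, and `m, m'` are continuous and strictly increasing,
then on the interior of the support of `Y` (where the CDF `F` of `Y` lies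
strictly between 0 and 1) the counterfactual mapping `m' ∘ m⁻¹` equals the
quantile function of `Y'` composed with the CDF of `Y`. -/
theorem stmt_1 {Ω : Type*} [MeasurableSpace Ω] (μ : Measure Ω) [IsProbabilityMeasure μ]
    (ε : Ω → ℝ) (hε : Measurable ε)
    (hG_cont : Continuous (fun t => (μ {ω | ε ω ≤ t}).toReal))
    (hG_mono : StrictMono (fun t => (μ {ω | ε ω ≤ t}).toReal))
    (m m' minv : ℝ → ℝ)
    (hm_cont : Continuous m) (hm_mono : StrictMono m)
    (hm'_cont : Continuous m') (hm'_mono : StrictMono m')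
    (hinv : ∀ x : ℝ, minv (m x) = x)
    (F F' Finv' : ℝ → ℝ)
    (hF : ∀ y, F y = (μ {ω | m (ε ω) ≤ y}).toReal)
    (hF' : ∀ y, F' y = (μ {ω | m' (ε ω) ≤ y}).toReal)
    (hFinv' : ∀ p ∈ Set.Ioo (0 : ℝ) 1, F' (Finv' p) = p)
    (hFinv'_mono : StrictMonoOn Finv' (Set.Ioo (0 : ℝ) 1)) :
    ∀ y, F y ∈ Set.Ioo (0 : ℝ) 1 → m' (minv y) = Finv' (F y) := by
  intro y hy
  set G : ℝ → ℝ := fun t => (μ {ω | ε ω ≤ t}).toReal with hG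
  have hF'G : ∀ t, F' (m' t) = G t := by
    intro t
    rw [hF']
    congr 2
    ext ω
    simp [hm'_mono.le_iff_le]
  have hF'mono : Monotone F' := by
    intro a b hab
    rw [hF' a, hF' b]
    exact ENNReal.toReal_mono (measure_ne_top μ _)
      (measure_mono (fun ω h => le_trans h hab))
  -- `y` is in the range of `m`
  obtain ⟨x, hx⟩ : ∃ x, m x = y := by
    by_contra hcon
    push_neg at hcon
    rcases em (∃ t, m t ≤ y) with ⟨t1, ht1⟩ | h1
    · rcases em (∃ t, y ≤ m t) with ⟨t2, ht2⟩ | h2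
      · have hmem : y ∈ Set.uIcc (m t1) (m t2) :=
          Set.Icc_subset_uIcc ⟨ht1, ht2⟩
        obtain ⟨x, _, hx⟩ := intermediate_value_uIcc hm_cont.continuousOn hmem
        exact hcon x hx
      · push_neg at h2
        have h1 : F y = 1 := by
          rw [hF]
          have hs : {ω | m (ε ω) ≤ y} = Set.univ := by
            ext ω; simp [le_of_lt (h2 (ε ω))]
          rw [hs, measure_univ, ENNReal.toReal_one]
        linarith [hy.2]
    · push_neg at h1
      have h0 : F y = 0 := by
        rw [hF]
        have hs : {ω | m (ε ω) ≤ y} = ∅ := by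
          ext ω; simp [not_le.mpr (h1 (ε ω))]
        rw [hs, measure_empty, ENNReal.toReal_zero]
      linarith [hy.1]
  have hxy : minv y = x := by rw [← hx, hinv]
  have hFyG : F y = G x := by
    rw [hF, ← hx]
    congr 2; ext ω; simp [hm_mono.le_iff_le]
  have hF'F : F' (Finv' (F y)) = F y := hFinv' _ hy
  have key : F' (m' x) = F y := by rw [hF'G, hFyG]
  rw [hxy]
  by_contra hne
  rcases lt_or_gt_of_ne hne with hlt | hgt
  · -- `m' x < Finv' (F y)`
    have h1 : ∀ᶠ t in nhds x, m' t < Finv' (F y) :=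
      (hm'_cont.tendsto x).eventually_lt_const hlt
    have h2 : ∀ᶠ t in nhdsWithin x (Set.Ioi x), m' t < Finv' (F y) :=
      h1.filter_mono nhdsWithin_le_nhds
    have h3 : ∀ᶠ t in nhdsWithin x (Set.Ioi x), x < t :=
      eventually_mem_nhdsWithin
    obtain ⟨t, htlt, htx⟩ := (h2.and h3).exists
    have hGt : G x < G t := hG_mono htx
    have : F' (m' t) ≤ F' (Finv' (F y)) := hF'mono htlt.le
    rw [hF'G, hF'F] at this
    rw [hFyG] at this
    linarith
  · -- `Finv' (F y) < m' x`
    have h1 : ∀ᶠ t in nhds x, Finv' (F y) < m' t :=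
      (hm'_cont.tendsto x).eventually_const_lt hgt
    have h2 : ∀ᶠ t in nhdsWithin x (Set.Iio x), Finv' (F y) < m' t :=
      h1.filter_mono nhdsWithin_le_nhds
    have h3 : ∀ᶠ t in nhdsWithin x (Set.Iio x), t < x :=
      eventually_mem_nhdsWithin
    obtain ⟨t, htlt, htx⟩ := (h2.and h3).exists
    have hGt : G t < G x := hG_mono htx
    have : F' (Finv' (F y)) ≤ F' (m' t) := hF'mono htlt.le
    rw [hF'G, hF'F] at this
    rw [hFyG] at this
    linarith
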